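/- arXiv:2209.05439 — 4 statements merged into one kernel-verified Lean document; each statement's English description precedes it below -/
import Mathlib

section
/- Let g : (0,1) → ℂ extend to a continuously differentiable bounded function on (0,∞) such that the limit lim_{N→∞} ∫₁^N g(t)/t dt exists and g(0) := lim_{t→0⁺} g(t) exists. Then for every a > 0, the double limit as ε → 0⁺ and N → ∞ of ∫_ε^N (g(ra) − g(r))/r dr equals g(0)·ln(1/a). -/
/-!
Put `f t = g t / t`. Since `dt / t` is invariant under dilations, `∫_ε^N g(ra)/r dr = ∫_{εa}^{Na} f`,
so the integral in question is `∫_{εa}^{ε} f + ∫_N^{Na} f`. The second term tends to `0` as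
`N → ∞` because `∫_1^N f` converges. Rescaled, the first term is `∫_a^1 g(sε)/s ds`, which tends
to `g₀ ∫_a^1 ds/s = g₀ log(1/a)` as `ε → 0⁺` by dominated convergence, `g` being bounded.
-/

open Filter Set intervalIntegral Topology
open scoped Interval

theorem ContinuousOn.intervalIntegrable_of_Ioi {E : Type*} [NormedAddCommGroup E]
    {f : ℝ → E} {c x y : ℝ} (hf : ContinuousOn f (Ioi c)) (hx : c < x) (hy : c < y) :
    IntervalIntegrable f MeasureTheory.volume x y :=
  (hf.mono fun _ ht => (lt_min hx hy).trans_le ht.1).intervalIntegrable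

theorem ContinuousOn.comp_mul_right_Ioi {E : Type*} [TopologicalSpace E] {g : ℝ → E} {c : ℝ}
    (hg : ContinuousOn g (Ioi 0)) (hc : 0 < c) : ContinuousOn (fun x => g (x * c)) (Ioi 0) :=
  hg.comp (continuousOn_id.mul continuousOn_const) fun _ hx => mul_pos hx hc

theorem ContinuousOn.div_ofReal_Ioi {g : ℝ → ℂ} (hg : ContinuousOn g (Ioi 0)) :
    ContinuousOn (fun t => g t / t) (Ioi 0) :=
  hg.div Complex.continuous_ofReal.continuousOn fun _ ht => Complex.ofReal_ne_zero.2 ht.ne'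

theorem integral_comp_mul_right_div_self (g : ℝ → ℂ) {c : ℝ} (hc : c ≠ 0) (a b : ℝ) :
    ∫ x in a..b, g (x * c) / x = ∫ t in a * c..b * c, g t / t := by
  rw [← smul_integral_comp_mul_right, ← integral_smul]
  refine integral_congr fun x _ => ?_
  rcases eq_or_ne x 0 with rfl | hx
  · simp
  · have hc' : (c : ℂ) ≠ 0 := Complex.ofReal_ne_zero.2 hc
    rw [Complex.real_smul]
    push_cast
    field_simp

theorem integral_const_div_ofReal (z : ℂ) {a b : ℝ} (h : (0 : ℝ) ∉ [[a, b]]) :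
    ∫ s in a..b, z / (s : ℂ) = z * Real.log (b / a) := by
  simp_rw [div_eq_mul_inv z, ← Complex.ofReal_inv]
  rw [integral_const_mul, integral_ofReal, integral_inv h]

theorem integral_comp_mul_right_sub_div_self {g : ℝ → ℂ} (hg : ContinuousOn g (Ioi 0))
    {a x y : ℝ} (ha : 0 < a) (hx : 0 < x) (hy : 0 < y) :
    ∫ r in x..y, (g (r * a) - g r) / r =
      (∫ t in x * a..x, g t / t) + ∫ t in y..y * a, g t / t := by
  have hint : ∀ {u v : ℝ}, 0 < u → 0 < v →
      IntervalIntegrable (fun t => g t / t) MeasureTheory.volume u v :=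
    fun hu hv => hg.div_ofReal_Ioi.intervalIntegrable_of_Ioi hu hv
  simp_rw [sub_div]
  rw [integral_sub ((hg.comp_mul_right_Ioi ha).div_ofReal_Ioi.intervalIntegrable_of_Ioi hx hy)
      (hint hx hy), integral_comp_mul_right_div_self g ha.ne',
    ← integral_add_adjacent_intervals (hint (mul_pos hx ha) hx) (hint hx (mul_pos hy ha)),
    ← integral_add_adjacent_intervals (hint hx hy) (hint hy (mul_pos hy ha))]
  abel

theorem tendsto_integral_div_self_mul_nhdsGT_zero {g : ℝ → ℂ} {C : ℝ} {g₀ : ℂ}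
    (hg : ContinuousOn g (Ioi 0)) (hbdd : ∀ t ∈ Ioi (0 : ℝ), ‖g t‖ ≤ C)
    (hg₀ : Tendsto g (𝓝[>] 0) (𝓝 g₀)) {a b : ℝ} (ha : 0 < a) (hb : 0 < b) :
    Tendsto (fun ε => ∫ t in a * ε..b * ε, g t / t) (𝓝[>] 0)
      (𝓝 (g₀ * Real.log (b / a))) := by
  have hpos : ∀ s ∈ [[a, b]], 0 < s := fun _ hs => (lt_min ha hb).trans_le hs.1
  rw [← integral_const_div_ofReal g₀ fun h => (hpos 0 h).false]
  refine (tendsto_integral_filter_of_dominated_convergence (F := fun ε s => g (s * ε) / s)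
    (fun s => C / s) ?_ ?_ ?_ ?_).congr' ?_
  · filter_upwards [self_mem_nhdsWithin] with ε hε
    exact ((hg.comp_mul_right_Ioi hε).div_ofReal_Ioi.intervalIntegrable_of_Ioi ha hb).def'.1
  · filter_upwards [self_mem_nhdsWithin] with ε (hε : 0 < ε)
    refine .of_forall fun s hs => ?_
    have hs₀ : 0 < s := hpos s (uIoc_subset_uIcc hs)
    rw [norm_div, Complex.norm_real, Real.norm_of_nonneg hs₀.le]
    exact div_le_div_of_nonneg_right (hbdd _ (mul_pos hs₀ hε)) hs₀.le
  · exact (continuousOn_const.div continuousOn_id fun _ ht => ht.ne').intervalIntegrable_of_Ioi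
      ha hb
  · refine .of_forall fun s hs => ?_
    have hs₀ : 0 < s := hpos s (uIoc_subset_uIcc hs)
    have hscale : Tendsto (fun ε => s * ε) (𝓝[>] 0) (𝓝[>] 0) :=
      tendsto_nhdsWithin_iff.2
        ⟨((mul_zero s ▸ (continuous_const_mul s).tendsto 0).mono_left nhdsWithin_le_nhds),
          eventually_nhdsWithin_of_forall fun ε hε => mul_pos hs₀ hε⟩
    exact (hg₀.comp hscale).div_const _
  · filter_upwards [self_mem_nhdsWithin] with ε (hε : 0 < ε)
    exact integral_comp_mul_right_div_self g hε.ne' a b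

theorem tendsto_integral_mul_right_atTop_zero {E : Type*} [NormedAddCommGroup E]
    [NormedSpace ℝ E] {f : ℝ → E} (hf : ContinuousOn f (Ioi 0)) {b : ℝ} (hb : 0 < b) {L : E}
    (hL : Tendsto (fun N => ∫ t in b..N, f t) atTop (𝓝 L)) {a : ℝ} (ha : 0 < a) :
    Tendsto (fun N => ∫ t in N..N * a, f t) atTop (𝓝 0) := by
  have hNa : Tendsto (fun N : ℝ => N * a) atTop atTop := tendsto_id.atTop_mul_const ha
  refine (sub_self L ▸ (hL.comp hNa).sub hL).congr' ?_
  filter_upwards [eventually_gt_atTop 0] with N hN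
  exact integral_interval_sub_left (hf.intervalIntegrable_of_Ioi hb (mul_pos hN ha))
    (hf.intervalIntegrable_of_Ioi hb hN)

theorem frullani_limit_general (g g' : ℝ → ℂ) (C : ℝ)
    (hderiv : ∀ t ∈ Ioi (0 : ℝ), HasDerivAt g (g' t) t)
    (hbdd : ∀ t ∈ Ioi (0 : ℝ), ‖g t‖ ≤ C)
    (L : ℂ) (hL : Tendsto (fun N : ℝ => ∫ t in (1 : ℝ)..N, g t / t) atTop (𝓝 L))
    (g₀ : ℂ) (hg₀ : Tendsto g (nhdsWithin 0 (Ioi 0)) (𝓝 g₀))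
    (a : ℝ) (ha : 0 < a) :
    Tendsto (fun p : ℝ × ℝ => ∫ r in p.1..p.2, (g (r * a) - g r) / r)
      ((nhdsWithin 0 (Ioi 0)) ×ˢ atTop)
      (𝓝 (g₀ * (Real.log (1 / a) : ℂ))) := by
  have hg : ContinuousOn g (Ioi 0) := fun t ht => (hderiv t ht).continuousAt.continuousWithinAt
  have head := tendsto_integral_div_self_mul_nhdsGT_zero hg hbdd hg₀ ha one_pos
  have tail := tendsto_integral_mul_right_atTop_zero hg.div_ofReal_Ioi one_pos hL ha
  refine (add_zero (g₀ * (Real.log (1 / a) : ℂ)) ▸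
    (head.comp tendsto_fst).add (tail.comp tendsto_snd)).congr' ?_
  filter_upwards [prod_mem_prod self_mem_nhdsWithin (Ioi_mem_atTop 0)] with ⟨ε, N⟩ ⟨hε, hN⟩
  simp only [Function.comp_apply, one_mul]
  rw [integral_comp_mul_right_sub_div_self hg ha hε hN, mul_comm a ε]

/-- Frullani-type identity: if `g : (0,∞) → ℂ` is continuously differentiable and
bounded, `∫₁^N g(t)/t dt` converges as `N → ∞`, and `g` has a limit `g₀` at `0⁺`, then
for each `a > 0`,
`lim_{ε→0⁺, N→∞} ∫_ε^N (g(ra) − g(r))/r dr = g₀ · ln(1/a)`. -/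
theorem frullani_limit (g g' : ℝ → ℂ) (C : ℝ)
    (hderiv : ∀ t ∈ Ioi (0 : ℝ), HasDerivAt g (g' t) t)
    (hcont : ContinuousOn g' (Ioi 0))
    (hbdd : ∀ t ∈ Ioi (0 : ℝ), ‖g t‖ ≤ C)
    (L : ℂ) (hL : Tendsto (fun N : ℝ => ∫ t in (1 : ℝ)..N, g t / t) atTop (𝓝 L))
    (g₀ : ℂ) (hg₀ : Tendsto g (nhdsWithin 0 (Ioi 0)) (𝓝 g₀))
    (a : ℝ) (ha : 0 < a) :
    Tendsto (fun p : ℝ × ℝ => ∫ r in p.1..p.2, (g (r * a) - g r) / r)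
      ((nhdsWithin 0 (Ioi 0)) ×ˢ atTop)
      (𝓝 (g₀ * (Real.log (1 / a) : ℂ))) :=
  frullani_limit_general g g' C hderiv hbdd L hL g₀ hg₀ a ha
end

section
/- Let g : (0,∞) → ℂ be continuously differentiable and bounded with ‖g‖_∞ := sup |g|. Then for all a > 0 and all 0 < ε < N < ∞, one has |∫_ε^N (g(ra) − g(r))/r dr| ≤ 2‖g‖_∞ · |ln a|. -/
open Filter Set intervalIntegral Topology

/-! Substituting `u = r a` turns `∫_ε^N g(ra)/r dr` into `∫_{εa}^{Na} g(u)/u du`, so the integral in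
question is `∫_N^{Na} g(u)/u du - ∫_ε^{εa} g(u)/u du`. Each of these is over an interval of
logarithmic length `|ln a|`, on which `|g(u)/u| ≤ ‖g‖_∞ / u`. -/

section DivId

variable {g : ℝ → ℂ} {b c : ℝ}

lemma intervalIntegrable_div_id_of_continuousOn_Ioi (hg : ContinuousOn g (Ioi 0))
    (hb : 0 < b) (hc : 0 < c) :
    IntervalIntegrable (fun u => g u / u) MeasureTheory.volume b c := by
  have hpos : uIcc b c ⊆ Ioi 0 := fun u hu => (lt_min hb hc).trans_le hu.1
  refine ContinuousOn.intervalIntegrable ((hg.mono hpos).div (by fun_prop) fun u hu => ?_)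
  exact_mod_cast (hpos hu).ne'

lemma norm_integral_div_id_le {C : ℝ} (hbdd : ∀ t ∈ Ioi (0 : ℝ), ‖g t‖ ≤ C)
    (hb : 0 < b) (hc : 0 < c) :
    ‖∫ u in b..c, g u / u‖ ≤ C * |Real.log (c / b)| := by
  have hpos : uIoc b c ⊆ Ioi 0 := fun u hu => (lt_min hb hc).trans hu.1
  have hC : 0 ≤ C := (norm_nonneg _).trans (hbdd b hb)
  have hle : ∀ u ∈ uIoc b c, ‖g u / u‖ ≤ C * u⁻¹ := fun u hu => by
    have hu : 0 < u := hpos hu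
    rw [norm_div, Complex.norm_real, Real.norm_of_nonneg hu.le, div_eq_mul_inv]
    gcongr
    exact hbdd u hu
  have hinv : IntervalIntegrable (fun u : ℝ => C * u⁻¹) MeasureTheory.volume b c :=
    (intervalIntegrable_inv (fun u hu => ((lt_min hb hc).trans_le hu.1).ne')
      continuousOn_id).const_mul C
  calc ‖∫ u in b..c, g u / u‖ ≤ |∫ u in b..c, C * u⁻¹| :=
        norm_integral_le_abs_of_norm_le
          (MeasureTheory.ae_restrict_of_forall_mem measurableSet_uIoc hle) hinv
    _ = C * |Real.log (c / b)| := by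
        rw [integral_const_mul, integral_inv_of_pos hb hc, abs_mul, abs_of_nonneg hC]

end DivId

lemma integral_comp_mul_right_div_id (g : ℝ → ℂ) {a : ℝ} (ha : a ≠ 0) (b c : ℝ) :
    ∫ r in b..c, g (r * a) / r = ∫ u in b * a..c * a, g u / u := by
  have hscale : (fun r : ℝ => g (r * a) / r) = fun r => a • (g (r * a) / ↑(r * a)) := by
    ext r
    by_cases hr : r = 0
    · simp [hr]
    have hr' : (r : ℂ) ≠ 0 := Complex.ofReal_ne_zero.mpr hr
    have ha' : (a : ℂ) ≠ 0 := Complex.ofReal_ne_zero.mpr ha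
    rw [Complex.real_smul, Complex.ofReal_mul]
    field_simp
  rw [hscale, integral_smul, smul_integral_comp_mul_right (fun u => g u / u) a]

theorem frullani_bound_general (g g' : ℝ → ℂ) (C : ℝ)
    (hderiv : ∀ t ∈ Ioi (0 : ℝ), HasDerivAt g (g' t) t)
    (hbdd : ∀ t ∈ Ioi (0 : ℝ), ‖g t‖ ≤ C)
    (a : ℝ) (ha : 0 < a) (ε N : ℝ) (hε : 0 < ε) (hεN : ε < N) :
    ‖∫ r in ε..N, (g (r * a) - g r) / r‖ ≤ 2 * C * |Real.log a| := by
  have hN : 0 < N := hε.trans hεN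
  have hg : ContinuousOn g (Ioi 0) := fun t ht => (hderiv t ht).continuousAt.continuousWithinAt
  have hint {b c : ℝ} (hb : 0 < b) (hc : 0 < c) :=
    intervalIntegrable_div_id_of_continuousOn_Ioi hg hb hc
  have hint_a : IntervalIntegrable (fun r => g (r * a) / r) MeasureTheory.volume ε N :=
    intervalIntegrable_div_id_of_continuousOn_Ioi
      (hg.comp (by fun_prop) fun r hr => mul_pos hr ha) hε hN
  have hsplit : ∫ r in ε..N, (g (r * a) - g r) / r
      = (∫ u in ε * a..ε, g u / u) - ∫ u in N * a..N, g u / u := by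
    simp_rw [sub_div]
    rw [integral_sub hint_a (hint hε hN), integral_comp_mul_right_div_id g ha.ne',
      integral_interval_sub_interval_comm (hint (mul_pos hε ha) (mul_pos hN ha)) (hint hε hN)
        (hint (mul_pos hε ha) hε)]
  have hlog {x : ℝ} (hx : 0 < x) : |Real.log (x / (x * a))| = |Real.log a| := by
    rw [div_mul_cancel_left₀ hx.ne', Real.log_inv, abs_neg]
  calc ‖∫ r in ε..N, (g (r * a) - g r) / r‖
      ≤ ‖∫ u in ε * a..ε, g u / u‖ + ‖∫ u in N * a..N, g u / u‖ := hsplit ▸ norm_sub_le _ _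
    _ ≤ C * |Real.log a| + C * |Real.log a| := by
        gcongr
        · exact hlog hε ▸ norm_integral_div_id_le hbdd (mul_pos hε ha) hε
        · exact hlog hN ▸ norm_integral_div_id_le hbdd (mul_pos hN ha) hN
    _ = 2 * C * |Real.log a| := by ring

/-- If `g : (0,∞) → ℂ` is continuously differentiable and bounded with `‖g‖_∞ ≤ C`,
then for all `a > 0` and `0 < ε < N < ∞`,
`|∫_ε^N (g(ra) − g(r))/r dr| ≤ 2‖g‖_∞ |ln a|`. -/
theorem frullani_bound (g g' : ℝ → ℂ) (C : ℝ)
    (hderiv : ∀ t ∈ Ioi (0 : ℝ), HasDerivAt g (g' t) t)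
    (hcont : ContinuousOn g' (Ioi 0))
    (hbdd : ∀ t ∈ Ioi (0 : ℝ), ‖g t‖ ≤ C)
    (a : ℝ) (ha : 0 < a) (ε N : ℝ) (hε : 0 < ε) (hεN : ε < N) :
    ‖∫ r in ε..N, (g (r * a) - g r) / r‖ ≤ 2 * C * |Real.log a| :=
  frullani_bound_general g g' C hderiv hbdd a ha ε N hε hεN
end

section
/- Let g : [0,∞) → ℝ be continuous with g(0) = max_{t ≥ 0} g(t), and suppose that ∫₀^N (g(0) − g(t))/t dt exists (is finite) for all N > 0. Then for all N > 0: if a ∈ [0,1] then ∫₀^N (g(ra) − g(r))/r dr ≥ 0, and if a ∈ [1,∞) then ∫₀^N (g(ra) − g(r))/r dr ≤ 0. -/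
/-! One has `(g(ra) - g(r))/r = F(r) - a F(ra)` with `F(t) = (g(0) - g(t))/t ≥ 0`, so for
`a > 0` the integral over `[ε, N]` equals `∫_{Na}^N F - ∫_{εa}^ε F`. The last term is at most
`sup_{[0, ε(1+a)]} |g(0) - g| · |log a|`, which tends to `0` with `ε` by continuity of `g` at `0`.
Hence the integral over `[0, N]` is `∫_{Na}^N F`, whose sign is that of `1 - a`. When the
integral over `[0, N]` does not exist, its Lean value is `0` and there is nothing to prove. -/

open Filter Set intervalIntegral Topology
open Real
open MeasureTheory (IntegrableOn ae_restrict_of_forall_mem)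

theorem intervalIntegrable_of_continuousOn_Ioi {f : ℝ → ℝ} (hf : ContinuousOn f (Ioi 0))
    {c d : ℝ} (hc : 0 < c) (hd : 0 < d) : IntervalIntegrable f MeasureTheory.volume c d :=
  (hf.mono fun _ ht => (lt_min hc hd).trans_le ht.1).intervalIntegrable

theorem integral_sub_mul_comp_mul_right {f : ℝ → ℝ} (hf : ContinuousOn f (Ioi 0))
    {a c d : ℝ} (ha : 0 < a) (hc : 0 < c) (hd : 0 < d) :
    ∫ x in c..d, (f x - a * f (x * a)) = (∫ x in d * a..d, f x) - ∫ x in c * a..c, f x := by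
  have hfa : ContinuousOn (fun x => a * f (x * a)) (Ioi 0) :=
    continuousOn_const.mul <| hf.comp (continuousOn_id.mul continuousOn_const)
      fun x hx => mul_pos hx ha
  have hfi {x y : ℝ} (hx : 0 < x) (hy : 0 < y) := intervalIntegrable_of_continuousOn_Ioi hf hx hy
  rw [integral_sub (hfi hc hd) (intervalIntegrable_of_continuousOn_Ioi hfa hc hd),
    intervalIntegral.integral_const_mul, mul_integral_comp_mul_right,
    integral_interval_sub_interval_comm' (hfi hc hd) (hfi (by positivity) (by positivity))
      (hfi hc (by positivity))]

theorem frullani_integrand_eq (g : ℝ → ℝ) (a r : ℝ) :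
    (g (r * a) - g r) / r = (g 0 - g r) / r - a * ((g 0 - g (r * a)) / (r * a)) := by
  rcases eq_or_ne r 0 with rfl | hr
  · simp
  rcases eq_or_ne a 0 with rfl | ha
  · simp
  field_simp
  ring

theorem abs_integral_div_self_le {h : ℝ → ℝ} {η c d : ℝ} (hc : 0 < c) (hd : 0 < d)
    (hh : ∀ t ∈ uIcc c d, |h t| ≤ η) :
    |∫ t in c..d, h t / t| ≤ η * |log (d / c)| := by
  have hη : 0 ≤ η := (abs_nonneg _).trans (hh c left_mem_uIcc)
  have hpos : ∀ t ∈ uIcc c d, 0 < t := fun t ht => (lt_min hc hd).trans_le ht.1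
  have hbound : ∀ t ∈ uIoc c d, ‖h t / t‖ ≤ η * t⁻¹ := fun t ht => by
    have ht := uIoc_subset_uIcc ht
    rw [Real.norm_eq_abs, abs_div, abs_of_pos (hpos t ht), div_eq_mul_inv]
    exact mul_le_mul_of_nonneg_right (hh t ht) (inv_nonneg.2 (hpos t ht).le)
  calc |∫ t in c..d, h t / t| ≤ |∫ t in c..d, η * t⁻¹| :=
        norm_integral_le_abs_of_norm_le (ae_restrict_of_forall_mem measurableSet_uIoc hbound)
          ((intervalIntegrable_inv (fun t ht => (hpos t ht).ne') continuousOn_id).const_mul η)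
    _ = η * |log (d / c)| := by
        rw [intervalIntegral.integral_const_mul, integral_inv_of_pos hc hd, abs_mul,
          abs_of_nonneg hη]

theorem tendsto_integral_frullani_remainder {g : ℝ → ℝ} (hg : ContinuousWithinAt g (Ici 0) 0)
    {a : ℝ} (ha : 0 < a) :
    Tendsto (fun ε => ∫ t in ε * a..ε, (g 0 - g t) / t) (𝓝[>] 0) (𝓝 0) := by
  refine Metric.tendsto_nhds.2 fun η hη => ?_
  set η' := η / (|log a| + 1)
  obtain ⟨δ, hδ, hgδ⟩ := Metric.continuousWithinAt_iff.1 hg η' (by positivity)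
  filter_upwards [Ioo_mem_nhdsGT (by positivity : 0 < δ / (1 + a))] with ε ⟨hε, hεδ⟩
  have hclose : ∀ t ∈ uIcc (ε * a) ε, |g 0 - g t| ≤ η' := fun t ht => by
    have ht₀ : 0 < t := (lt_min (by positivity) hε).trans_le ht.1
    have htδ : t < δ := calc
      t ≤ ε * a + ε := ht.2.trans (max_le (by linarith) (by nlinarith))
      _ < δ := by rw [lt_div_iff₀ (by positivity)] at hεδ; linarith
    rw [abs_sub_comm, ← Real.dist_eq]
    exact (hgδ ht₀.le (by rwa [Real.dist_eq, sub_zero, abs_of_pos ht₀])).le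
  calc dist (∫ t in ε * a..ε, (g 0 - g t) / t) 0
      ≤ η' * |log (ε / (ε * a))| := by
        rw [Real.dist_eq, sub_zero]
        exact abs_integral_div_self_le (by positivity) hε hclose
    _ = η' * |log a| := by
        rw [div_mul_cancel_left₀ hε.ne', log_inv, abs_neg]
    _ < η := by
        rw [div_mul_eq_mul_div, div_lt_iff₀ (by positivity)]
        nlinarith [abs_nonneg (log a)]

theorem integral_frullani_eq {g : ℝ → ℝ} (hg : ContinuousOn g (Ici 0)) {a N : ℝ} (ha : 0 < a)
    (hN : 0 < N)
    (hf : IntervalIntegrable (fun r => (g (r * a) - g r) / r) MeasureTheory.volume 0 N) :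
    ∫ r in 0..N, (g (r * a) - g r) / r = ∫ t in N * a..N, (g 0 - g t) / t := by
  have hF : ContinuousOn (fun t => (g 0 - g t) / t) (Ioi 0) :=
    (continuousOn_const.sub (hg.mono Ioi_subset_Ici_self)).div continuousOn_id
      fun t ht => ht.ne'
  have hlim_left : Tendsto (fun ε => ∫ r in ε..N, (g (r * a) - g r) / r) (𝓝[>] 0)
      (𝓝 (∫ r in 0..N, (g (r * a) - g r) / r)) := by
    have hIcc : IntegrableOn (fun r => (g (r * a) - g r) / r) (uIcc 0 N) := by
      rw [uIcc_of_le hN.le]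
      exact (intervalIntegrable_iff_integrableOn_Icc_of_le hN.le).1 hf
    have hcont := continuousOn_primitive_interval_left hIcc 0 left_mem_uIcc
    refine ((hcont.mono_of_mem_nhdsWithin ?_).mono Ioi_subset_Ici_self).tendsto
    rw [uIcc_of_le hN.le]
    exact Icc_mem_nhdsGE hN
  have hlim_right : Tendsto (fun ε => ∫ r in ε..N, (g (r * a) - g r) / r) (𝓝[>] 0)
      (𝓝 ((∫ t in N * a..N, (g 0 - g t) / t) - 0)) := by
    refine (tendsto_const_nhds.sub
      (tendsto_integral_frullani_remainder (hg 0 self_mem_Ici) ha)).congr' ?_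
    filter_upwards [self_mem_nhdsWithin] with ε (hε : 0 < ε)
    simp_rw [frullani_integrand_eq g a]
    exact (integral_sub_mul_comp_mul_right hF ha hε hN).symm
  rw [sub_zero] at hlim_right
  exact tendsto_nhds_unique hlim_left hlim_right

theorem sign_of_frullani_integral_general (g : ℝ → ℝ)
    (hcont : ContinuousOn g (Ici 0))
    (hmax : ∀ t ∈ Ici (0 : ℝ), g t ≤ g 0)
    (N : ℝ) (hN : 0 < N) (a : ℝ) :
    (a ∈ Icc (0 : ℝ) 1 → 0 ≤ ∫ r in (0 : ℝ)..N, (g (r * a) - g r) / r) ∧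
    (a ∈ Ici (1 : ℝ) → (∫ r in (0 : ℝ)..N, (g (r * a) - g r) / r) ≤ 0) := by
  have hF_nonneg : ∀ t, 0 ≤ t → 0 ≤ (g 0 - g t) / t := fun t ht =>
    div_nonneg (sub_nonneg.2 (hmax t ht)) ht
  constructor
  · rintro ⟨ha₀, ha₁⟩
    rcases ha₀.eq_or_lt with rfl | ha
    · simp only [mul_zero]
      exact integral_nonneg hN.le fun r hr => hF_nonneg r hr.1
    by_cases hf : IntervalIntegrable (fun r => (g (r * a) - g r) / r) MeasureTheory.volume 0 N
    · rw [integral_frullani_eq hcont ha hN hf]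
      exact integral_nonneg (mul_le_of_le_one_right hN.le ha₁) fun t ht =>
        hF_nonneg t ((by positivity : 0 ≤ N * a).trans ht.1)
    · exact (integral_undef hf).ge
  · intro (ha : 1 ≤ a)
    by_cases hf : IntervalIntegrable (fun r => (g (r * a) - g r) / r) MeasureTheory.volume 0 N
    · rw [integral_frullani_eq hcont (by positivity) hN hf, integral_symm, neg_nonpos]
      exact integral_nonneg (le_mul_of_one_le_right hN.le ha) fun t ht =>
        hF_nonneg t (hN.le.trans ht.1)
    · exact (integral_undef hf).le

/-- If `g : [0,∞) → ℝ` is continuous with `g(0) = max_{t≥0} g(t)` and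
`∫₀^N (g(0) − g(t))/t dt` exists for all `N > 0`, then for all `N > 0` the integral
`∫₀^N (g(ra) − g(r))/r dr` is `≥ 0` for `a ∈ [0,1]` and `≤ 0` for `a ∈ [1,∞)`. -/
theorem sign_of_frullani_integral (g : ℝ → ℝ)
    (hcont : ContinuousOn g (Ici 0))
    (hmax : ∀ t ∈ Ici (0 : ℝ), g t ≤ g 0)
    (hint : ∀ N : ℝ, 0 < N → IntervalIntegrable (fun t => (g 0 - g t) / t) volume 0 N)
    (N : ℝ) (hN : 0 < N) (a : ℝ) :
    (a ∈ Icc (0 : ℝ) 1 → 0 ≤ ∫ r in (0 : ℝ)..N, (g (r * a) - g r) / r) ∧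
    (a ∈ Ici (1 : ℝ) → (∫ r in (0 : ℝ)..N, (g (r * a) - g r) / r) ≤ 0) :=
  sign_of_frullani_integral_general g hcont hmax N hN a
end

section
/- For every n ∈ ℕ and every ξ ∈ ℝⁿ, the Fourier transform of the surface measure σ_{n−1} on the unit sphere 𝕊^{n−1} satisfies σ̂_{n−1}(ξ) = ∫_{𝕊^{n−1}} e^{iξ·x} dσ_{n−1}(x) = ω_{n−1} K_n(|ξ|), where ω_{n−1} = 2π^{n/2}/Γ(n/2) is the surface area of 𝕊^{n−1} and K_n(t) = Σ_{k≥0} (−1)^k (t/2)^{2k} / ((n/2,k) k!). -/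
/-!
Expanding `exp (i ⟪ξ, θ⟫)` in its power series and integrating termwise reduces the claim to the
moments `∫ ⟪ξ, θ⟫ ^ m dσ`. These come from integrating `⟪ξ, x⟫ ^ m e^{-‖x‖²}` over `ℝⁿ` in two ways:
in polar coordinates it is the moment times `Γ((n + m) / 2) / 2`, while a reflection taking `ξ` to
`‖ξ‖ e₁` followed by Fubini gives `‖ξ‖ ^ m π^{(n - 1) / 2} ∫ t ^ m e^{-t²} dt`. The odd moments
vanish, and Legendre's duplication formula turns the even ones into the coefficients of `K_n`.
-/

open MeasureTheory Metric
open scoped Real RealInnerProductSpace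

/-- The generalized hypergeometric function `K_n`. -/
noncomputable def Kn (n : ℕ) (t : ℝ) : ℝ :=
  ∑' k : ℕ, (-1) ^ k /
      ((Real.Gamma ((n : ℝ) / 2 + k) / Real.Gamma ((n : ℝ) / 2)) * (Nat.factorial k)) *
    (t / 2) ^ (2 * k)

/-- The surface area `ω_{n−1} = 2 π^{n/2} / Γ(n/2)` of the unit sphere in `ℝⁿ`. -/
noncomputable def omegaSphere (n : ℕ) : ℝ :=
  2 * Real.pi ^ ((n : ℝ) / 2) / Real.Gamma ((n : ℝ) / 2)

open Set
open scoped Nat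

theorem integral_Ioi_pow_mul_exp_neg_sq (m : ℕ) :
    ∫ r in Ioi (0 : ℝ), r ^ m * Real.exp (-r ^ 2) = Real.Gamma ((m + 1) / 2) / 2 := by
  have h := integral_rpow_mul_exp_neg_rpow (p := 2) (q := m) two_pos
    (neg_one_lt_zero.trans_le m.cast_nonneg)
  rw [one_div, inv_mul_eq_div] at h
  rw [← h]
  refine setIntegral_congr_fun measurableSet_Ioi fun r _ => ?_
  norm_cast

theorem integral_even_pow_mul_exp_neg_sq (k : ℕ) :
    ∫ t : ℝ, t ^ (2 * k) * Real.exp (-t ^ 2) = Real.Gamma (k + 1 / 2) := by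
  have h := integral_comp_abs (f := fun s : ℝ => s ^ (2 * k) * Real.exp (-s ^ 2))
  simp only [(even_two_mul k).pow_abs, sq_abs] at h
  rw [h, integral_Ioi_pow_mul_exp_neg_sq, mul_div_cancel₀ _ two_ne_zero]
  congr 1
  push_cast
  ring

theorem integral_odd_pow_mul_exp_neg_sq (k : ℕ) :
    ∫ t : ℝ, t ^ (2 * k + 1) * Real.exp (-t ^ 2) = 0 := by
  have h := integral_neg_eq_self (fun t : ℝ => t ^ (2 * k + 1) * Real.exp (-t ^ 2)) volume
  simp only [Odd.neg_pow (odd_two_mul_add_one k), even_two.neg_pow, neg_mul, integral_neg] at h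
  linarith

theorem Real.Gamma_nat_add_half_mul_factorial (k : ℕ) :
    Real.Gamma (k + 1 / 2) * k ! = √π * (2 * k)! / 4 ^ k := by
  have h := Real.Gamma_mul_Gamma_add_half (k + 1 / 2)
  rw [show (k : ℝ) + 1 / 2 + 1 / 2 = k + 1 by ring, Real.Gamma_nat_eq_factorial,
    show 2 * ((k : ℝ) + 1 / 2) = (2 * k : ℕ) + 1 by push_cast; ring, Real.Gamma_nat_eq_factorial,
    show (1 : ℝ) - ((2 * k : ℕ) + 1) = -(2 * k : ℕ) by ring, Real.rpow_neg zero_le_two,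
    Real.rpow_natCast, pow_mul] at h
  rw [h]
  norm_num
  ring

theorem MeasureTheory.hasSum_integral_cexp_mul {α : Type*} [MeasurableSpace α] (μ : Measure α)
    [IsFiniteMeasure μ] {c : α → ℝ} (hc : AEStronglyMeasurable c μ) {C : ℝ}
    (hC : ∀ᵐ a ∂μ, ‖c a‖ ≤ C) (z : ℂ) :
    HasSum (fun k : ℕ => z ^ k / k ! * ((∫ a, c a ^ k ∂μ : ℝ) : ℂ))
      (∫ a, Complex.exp (z * c a) ∂μ) := by
  set F : ℕ → α → ℂ := fun k a => (z * c a) ^ k / (k ! : ℂ)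
  have hF_le : ∀ k, ∀ᵐ a ∂μ, ‖F k a‖ ≤ (‖z‖ * C) ^ k / k ! := fun k => by
    filter_upwards [hC] with a ha
    simp only [F, norm_div, norm_pow, norm_mul, Complex.norm_real, Complex.norm_natCast]
    gcongr
  have hF_int : ∀ k, Integrable (F k) μ := fun k => .of_bound (by fun_prop) _ (hF_le k)
  have hF_sum : Summable fun k => ∫ a, ‖F k a‖ ∂μ := by
    refine .of_nonneg_of_le (fun k => integral_nonneg fun a => norm_nonneg _) (fun k => ?_)
      ((Real.summable_pow_div_factorial (‖z‖ * C)).mul_right (μ.real univ))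
    calc ∫ a, ‖F k a‖ ∂μ ≤ ∫ _, (‖z‖ * C) ^ k / k ! ∂μ :=
          integral_mono_ae (hF_int k).norm (integrable_const _) (hF_le k)
      _ = _ := by rw [integral_const, smul_eq_mul, mul_comm]
  have hterm : ∀ k, ∫ a, F k a ∂μ = z ^ k / k ! * ((∫ a, c a ^ k ∂μ : ℝ) : ℂ) := fun k => by
    rw [← integral_complex_ofReal, ← integral_const_mul]
    congr 1 with a
    simp only [F, mul_pow, Complex.ofReal_pow]
    ring
  have hexp : ∀ a, ∑' k, F k a = Complex.exp (z * c a) := fun a => by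
    rw [Complex.exp_eq_exp_ℂ]
    exact (NormedSpace.expSeries_div_hasSum_exp _).tsum_eq
  simpa only [hterm, hexp] using hasSum_integral_of_summable_integral_norm hF_int hF_sum

theorem MeasureTheory.integral_eq_integral_toSphere_mul_integral_Ioi
    {E : Type*} [NormedAddCommGroup E] [NormedSpace ℝ E] [FiniteDimensional ℝ E]
    [MeasurableSpace E] [BorelSpace E] [Nontrivial E] (μ : Measure E) [μ.IsAddHaarMeasure]
    {g : E → ℝ} {F : sphere (0 : E) 1 → ℝ} {G : ℝ → ℝ}
    (hg : ∀ (θ : sphere (0 : E) 1) (r : ℝ), 0 < r → g (r • (θ : E)) = F θ * G r) :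
    ∫ x, g x ∂μ = (∫ θ, F θ ∂μ.toSphere) *
      ∫ r in Ioi (0 : ℝ), r ^ (Module.finrank ℝ E - 1) * G r := by
  calc ∫ x, g x ∂μ = ∫ x : ({0}ᶜ : Set E), g x ∂(μ.comap (↑)) := by
        rw [integral_subtype_comap (measurableSet_singleton _).compl g, restrict_compl_singleton]
    _ = ∫ p, F p.1 * G p.2 ∂(μ.toSphere.prod (.volumeIoiPow (Module.finrank ℝ E - 1))) := by
        rw [← μ.measurePreserving_homeomorphUnitSphereProd.integral_comp
          (Homeomorph.measurableEmbedding _) (fun p => F p.1 * G p.2.1)]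
        refine integral_congr_ae (.of_forall fun x => ?_)
        dsimp only
        rw [homeomorphUnitSphereProd_apply_snd_coe, ← hg _ _ (norm_pos_iff.2 x.2),
          homeomorphUnitSphereProd_apply_fst_coe, smul_inv_smul₀ (norm_ne_zero_iff.2 x.2)]
    _ = (∫ θ, F θ ∂μ.toSphere) *
          ∫ r : Ioi (0 : ℝ), G r ∂(.volumeIoiPow (Module.finrank ℝ E - 1)) :=
        integral_prod_mul F (fun r : Ioi (0 : ℝ) => G r)
    _ = _ := by
        congr 1
        rw [Measure.volumeIoiPow, integral_withDensity_eq_integral_toReal_smul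
          (by fun_prop) (.of_forall fun _ => ENNReal.ofReal_lt_top),
          integral_subtype_comap measurableSet_Ioi (fun r => (ENNReal.ofReal (r ^ _)).toReal • G r)]
        refine setIntegral_congr_fun measurableSet_Ioi fun r hr => ?_
        rw [ENNReal.toReal_ofReal (pow_nonneg (le_of_lt hr) _), smul_eq_mul]

theorem integral_comp_inner_norm_of_norm_eq {E F : Type*} [NormedAddCommGroup E]
    [InnerProductSpace ℝ E] [FiniteDimensional ℝ E] [MeasurableSpace E] [BorelSpace E]
    [NormedAddCommGroup F] [NormedSpace ℝ F] {u v : E} (h : ‖u‖ = ‖v‖) (f : ℝ → ℝ → F) :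
    ∫ x, f ⟪u, x⟫ ‖x‖ = ∫ x, f ⟪v, x⟫ ‖x‖ := by
  set R := (ℝ ∙ (u - v))ᗮ.reflection
  calc ∫ x, f ⟪u, x⟫ ‖x‖ = ∫ x, f ⟪R u, R x⟫ ‖R x‖ := by
        simp only [LinearIsometryEquiv.inner_map_map, LinearIsometryEquiv.norm_map]
    _ = ∫ x, f ⟪v, R x⟫ ‖R x‖ := by rw [Submodule.reflection_sub h]
    _ = ∫ x, f ⟪v, x⟫ ‖x‖ :=
        R.measurePreserving.integral_comp R.toHomeomorph.measurableEmbedding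
          fun y => f ⟪v, y⟫ ‖y‖

theorem EuclideanSpace.integral_apply_pow_mul_exp_neg_norm_sq {ι : Type*} [Fintype ι]
    (i : ι) (m : ℕ) :
    ∫ x : EuclideanSpace ℝ ι, x i ^ m * Real.exp (-‖x‖ ^ 2) =
      (∫ t : ℝ, t ^ m * Real.exp (-t ^ 2)) * √π ^ (Fintype.card ι - 1) := by
  classical
  have hprod : ∀ x : EuclideanSpace ℝ ι, x i ^ m * Real.exp (-‖x‖ ^ 2) =
      ∏ j, (if j = i then x j ^ m else 1) * Real.exp (-x j ^ 2) := by
    intro x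
    rw [EuclideanSpace.norm_sq_eq, Finset.prod_mul_distrib, Finset.prod_ite_eq',
      if_pos (Finset.mem_univ _), ← Real.exp_sum, ← Finset.sum_neg_distrib]
    simp only [Real.norm_eq_abs, sq_abs]
  simp_rw [hprod]
  have hgauss : ∫ t : ℝ, Real.exp (-t ^ 2) = √π := by simpa using integral_gaussian 1
  rw [← (PiLp.volume_preserving_toLp ι).integral_comp
      (MeasurableEquiv.toLp 2 (ι → ℝ)).measurableEmbedding, volume_pi,
    integral_fintype_prod_eq_prod fun j t => (if j = i then t ^ m else 1) * Real.exp (-t ^ 2),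
    ← Finset.mul_prod_erase _ _ (Finset.mem_univ i)]
  simp only [if_pos]
  rw [Finset.prod_congr rfl (g := fun _ => √π) fun j hj => by
      simp only [if_neg (Finset.ne_of_mem_erase hj), one_mul, hgauss],
    Finset.prod_const, Finset.card_erase_of_mem (Finset.mem_univ i), Finset.card_univ]

theorem EuclideanSpace.integral_inner_pow_mul_exp_neg_norm_sq {ι : Type*} [Fintype ι] [Nonempty ι]
    (ξ : EuclideanSpace ℝ ι) (m : ℕ) :
    ∫ x : EuclideanSpace ℝ ι, ⟪ξ, x⟫ ^ m * Real.exp (-‖x‖ ^ 2) =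
      ‖ξ‖ ^ m * (∫ t : ℝ, t ^ m * Real.exp (-t ^ 2)) * √π ^ (Fintype.card ι - 1) := by
  classical
  obtain ⟨i⟩ := ‹Nonempty ι›
  have h : ‖ξ‖ = ‖‖ξ‖ • EuclideanSpace.single i (1 : ℝ)‖ := by simp [norm_smul, PiLp.norm_single]
  rw [integral_comp_inner_norm_of_norm_eq h (fun s r => s ^ m * Real.exp (-r ^ 2))]
  simp only [real_inner_smul_left, EuclideanSpace.inner_single_left, starRingEnd_apply,
    star_trivial, one_mul, mul_pow, mul_assoc, integral_const_mul,
    EuclideanSpace.integral_apply_pow_mul_exp_neg_norm_sq]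

theorem EuclideanSpace.integral_toSphere_inner_pow {ι : Type*} [Fintype ι] [Nonempty ι]
    (ξ : EuclideanSpace ℝ ι) (m : ℕ) :
    ∫ θ, ⟪ξ, (θ : EuclideanSpace ℝ ι)⟫ ^ m ∂(volume : Measure (EuclideanSpace ℝ ι)).toSphere =
      2 / Real.Gamma ((Fintype.card ι + m) / 2) *
        (‖ξ‖ ^ m * (∫ t : ℝ, t ^ m * Real.exp (-t ^ 2)) * √π ^ (Fintype.card ι - 1)) := by
  set d := Fintype.card ι
  have hd : 1 ≤ d := Fintype.card_pos
  have hpolar := integral_eq_integral_toSphere_mul_integral_Ioi volume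
    (g := fun x : EuclideanSpace ℝ ι => ⟪ξ, x⟫ ^ m * Real.exp (-‖x‖ ^ 2))
    (F := fun θ => ⟪ξ, (θ : EuclideanSpace ℝ ι)⟫ ^ m) (G := fun r => r ^ m * Real.exp (-r ^ 2))
    fun θ r hr => by
      simp only [real_inner_smul_right, norm_smul, Real.norm_of_nonneg hr.le,
        norm_eq_of_mem_sphere θ, mul_one, mul_pow]
      ring
  have hradial : ∫ r in Ioi (0 : ℝ), r ^ (d - 1) * (r ^ m * Real.exp (-r ^ 2)) =
      Real.Gamma ((d + m) / 2) / 2 := by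
    simp only [← mul_assoc, ← pow_add, integral_Ioi_pow_mul_exp_neg_sq]
    push_cast [Nat.cast_sub hd]
    ring_nf
  rw [finrank_euclideanSpace, hradial,
    EuclideanSpace.integral_inner_pow_mul_exp_neg_norm_sq] at hpolar
  have hΓ : Real.Gamma ((d + m) / 2) ≠ 0 := (Real.Gamma_pos_of_pos (by positivity)).ne'
  rw [hpolar]
  field_simp

theorem EuclideanSpace.integral_toSphere_inner_odd_pow {ι : Type*} [Fintype ι] [Nonempty ι]
    (ξ : EuclideanSpace ℝ ι) (j : ℕ) :
    ∫ θ, ⟪ξ, (θ : EuclideanSpace ℝ ι)⟫ ^ (2 * j + 1)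
      ∂(volume : Measure (EuclideanSpace ℝ ι)).toSphere = 0 := by
  rw [integral_toSphere_inner_pow, integral_odd_pow_mul_exp_neg_sq]
  simp

theorem EuclideanSpace.integral_toSphere_inner_even_pow {ι : Type*} [Fintype ι] [Nonempty ι]
    (ξ : EuclideanSpace ℝ ι) (j : ℕ) :
    ∫ θ, ⟪ξ, (θ : EuclideanSpace ℝ ι)⟫ ^ (2 * j) ∂(volume : Measure (EuclideanSpace ℝ ι)).toSphere =
      omegaSphere (Fintype.card ι) * (2 * j)! /
        ((Real.Gamma (Fintype.card ι / 2 + j) / Real.Gamma (Fintype.card ι / 2)) * j !) *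
        (‖ξ‖ / 2) ^ (2 * j) := by
  rw [integral_toSphere_inner_pow, integral_even_pow_mul_exp_neg_sq,
    eq_div_of_mul_eq (by positivity) (Real.Gamma_nat_add_half_mul_factorial j), omegaSphere]
  set d := Fintype.card ι
  have hd : 1 ≤ d := Fintype.card_pos
  have hΓ : Real.Gamma (d / 2) ≠ 0 := (Real.Gamma_pos_of_pos (by positivity)).ne'
  have hπ : √π ^ (d - 1) * √π = π ^ ((d : ℝ) / 2) := by
    rw [← pow_succ, Nat.sub_add_cancel hd, Real.sqrt_eq_rpow, ← Real.rpow_natCast,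
      ← Real.rpow_mul Real.pi_nonneg, one_div_mul_eq_div]
  rw [← hπ, show ((d : ℝ) + (2 * j : ℕ)) / 2 = d / 2 + j by push_cast; ring, div_pow,
    pow_mul (2 : ℝ)]
  field_simp
  norm_num

/-- The Fourier transform of the surface measure `σ_{n−1}` of the unit sphere
`𝕊^{n−1} ⊂ ℝⁿ` satisfies `σ̂_{n−1}(ξ) = ω_{n−1} K_n(|ξ|)`. -/
theorem fourierTransform_sphere_surface_measure
    (n : ℕ) (hn : 1 ≤ n) (ξ : EuclideanSpace ℝ (Fin n)) :
    (∫ x : sphere (0 : EuclideanSpace ℝ (Fin n)) 1,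
        Complex.exp (Complex.I * (⟪ξ, (x : EuclideanSpace ℝ (Fin n))⟫ : ℝ))
        ∂((volume : Measure (EuclideanSpace ℝ (Fin n))).toSphere)) =
      (omegaSphere n : ℂ) * (Kn n ‖ξ‖ : ℝ) := by
  have : Nonempty (Fin n) := ⟨⟨0, hn⟩⟩
  have hseries := hasSum_integral_cexp_mul (volume : Measure (EuclideanSpace ℝ (Fin n))).toSphere
    (c := fun θ => ⟪ξ, (θ : EuclideanSpace ℝ (Fin n))⟫) (by fun_prop) (C := ‖ξ‖)
    (.of_forall fun θ => (norm_inner_le_norm _ _).trans (by rw [norm_eq_of_mem_sphere θ, mul_one]))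
    Complex.I
  rw [← (mul_right_injective₀ two_ne_zero).hasSum_iff fun k hk => by
    obtain ⟨j, rfl | rfl⟩ := Nat.even_or_odd' k
    · exact absurd ⟨j, rfl⟩ hk
    rw [EuclideanSpace.integral_toSphere_inner_odd_pow, Complex.ofReal_zero, mul_zero]] at hseries
  simp only [Function.comp_def, EuclideanSpace.integral_toSphere_inner_even_pow, Fintype.card_fin,
    pow_mul Complex.I, Complex.I_sq] at hseries
  rw [← hseries.tsum_eq, Kn, Complex.ofReal_tsum, ← tsum_mul_left]
  congr 1 with j
  have : ((2 * j)! : ℂ) ≠ 0 := Nat.cast_ne_zero.2 (Nat.factorial_ne_zero _)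
  push_cast
  field_simp
end
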